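/- arXiv:1801.08820 — 7 statements merged into one kernel-verified Lean document; each statement's English description precedes it below -/
import Mathlib

section
/- Let p be a prime, let a be in {1,...,p-1}, and let r be a positive integer with r ≡ a (mod p-1). Then the sum of the binomial coefficients C(r,j) over all integers j with 0 < j < r and j ≡ a (mod p-1) is congruent to 0 modulo p. -/
/-!
Work in `𝔽_p` and put `n = p - 1`. Choosing `e ≡ -a (mod n)`, orthogonality of the
characters `x ↦ x ^ i` of `𝔽_pˣ` gives
`∑_{x ∈ 𝔽_pˣ} x ^ e (1 + x) ^ m = -∑_{j ≤ m, j ≡ a (mod n)} C(m, j)`.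
For `m > 0` the left side depends only on `m mod n`, since `y ^ m = y ^ (m mod n)` for `y ≠ 0`
and `0 ^ m = 0`. Comparing `m = r` with `m = a`, for which the only such `j ∈ [0, a]` are `a` and
possibly `0`, leaves exactly the sum over `0 < j < r`.
-/

open Finset

theorem Nat.dvd_sub_mod_add_iff {n : ℕ} (hn : 0 < n) (c j : ℕ) :
    n ∣ n - c % n + j ↔ j % n = c % n := by
  have hc : c % n < n := Nat.mod_lt c hn
  have h0 : n - c % n + c ≡ 0 [MOD n] :=
    calc n - c % n + c ≡ n - c % n + c % n [MOD n] := (Nat.mod_modEq c n).symm.add_left _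
      _ = n := by omega
      _ ≡ 0 [MOD n] := Nat.modEq_zero_iff_dvd.2 dvd_rfl
  rw [← Nat.modEq_zero_iff_dvd]
  exact ⟨fun h => (h.trans h0.symm).add_left_cancel' _,
    fun h => (Nat.ModEq.add_left _ h).trans h0⟩

section FiniteField

variable {K : Type*} [Field K] [Fintype K]

local notation "q" => Fintype.card K

theorem pow_eq_pow_of_modEq_card_sub_one (y : K) {m m' : ℕ} (hm : m ≠ 0) (hm' : m' ≠ 0)
    (h : m ≡ m' [MOD q - 1]) : y ^ m = y ^ m' := by
  by_cases hy : y = 0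
  · simp [hy, zero_pow hm, zero_pow hm']
  · have hy1 := FiniteField.pow_card_sub_one_eq_one y hy
    rw [pow_eq_pow_mod m hy1, pow_eq_pow_mod m' hy1, h]

theorem sum_units_pow_mul_one_add_pow [DecidableEq K] (e m : ℕ) :
    ∑ x : Kˣ, (x : K) ^ e * (1 + x) ^ m
      = -∑ j ∈ (range (m + 1)).filter (fun j => q - 1 ∣ e + j), (m.choose j : K) := by
  have expand (x : K) :
      x ^ e * (1 + x) ^ m = ∑ j ∈ range (m + 1), (m.choose j : K) * x ^ (e + j) := by
    rw [add_comm, add_pow, mul_sum]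
    exact sum_congr rfl fun j _ => by rw [one_pow, pow_add]; ring
  simp_rw [expand]
  rw [sum_comm, sum_filter, ← sum_neg_distrib]
  refine sum_congr rfl fun j _ => ?_
  rw [← mul_sum, FiniteField.sum_pow_units]
  split_ifs <;> simp

theorem sum_choose_filter_mod_eq_of_modEq (c : ℕ) {m m' : ℕ} (hm : m ≠ 0) (hm' : m' ≠ 0)
    (h : m ≡ m' [MOD q - 1]) :
    ∑ j ∈ (range (m + 1)).filter (fun j => j % (q - 1) = c % (q - 1)), (m.choose j : K)
      = ∑ j ∈ (range (m' + 1)).filter (fun j => j % (q - 1) = c % (q - 1)),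
          (m'.choose j : K) := by
  classical
  have hq : 0 < q - 1 := Nat.sub_pos_of_lt Fintype.one_lt_card
  simp_rw [← Nat.dvd_sub_mod_add_iff hq c]
  apply neg_injective
  simp only [← sum_units_pow_mul_one_add_pow, pow_eq_pow_of_modEq_card_sub_one _ hm hm' h]

end FiniteField

theorem sum_filter_range_succ_eq {M : Type*} [AddCommMonoid M] (P : ℕ → Prop) [DecidablePred P]
    (f : ℕ → M) {m : ℕ} (hm : 0 < m) :
    ∑ j ∈ (range (m + 1)).filter P, f j
      = (if P 0 then f 0 else 0) + ∑ j ∈ (Ioo 0 m).filter P, f j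
          + (if P m then f m else 0) := by
  have hsplit : range (m + 1) = insert 0 (insert m (Ioo 0 m)) := by
    ext j; simp only [mem_range, mem_insert, mem_Ioo]; omega
  rw [hsplit, sum_filter, sum_insert (by simp [hm.ne]), sum_insert (by simp), sum_filter]
  abel

theorem filter_Ioo_mod_eq_eq_empty {n a : ℕ} (ha : a ≤ n) :
    (Ioo 0 a).filter (fun j => j % n = a % n) = ∅ := by
  refine filter_eq_empty_iff.2 fun j hj => ?_
  rw [mem_Ioo] at hj
  rw [Nat.mod_eq_of_lt (by omega : j < n)]
  rcases ha.lt_or_eq with ha | rfl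
  · rw [Nat.mod_eq_of_lt ha]; omega
  · rw [Nat.mod_self]; omega

/-- For a prime `p`, `a ∈ {1,…,p-1}` and `r > 0` with `r ≡ a (mod p-1)`,
the sum of `C(r,j)` over `0 < j < r` with `j ≡ a (mod p-1)` vanishes modulo `p`. -/
theorem sum_choose_cong_zero (p : ℕ) (hp : p.Prime) (a r : ℕ)
    (ha : 1 ≤ a) (ha' : a ≤ p - 1) (hr : 0 < r) (hra : r ≡ a [MOD p - 1]) :
    (∑ j ∈ (Finset.Ioo 0 r).filter (fun j => j % (p - 1) = a % (p - 1)), r.choose j)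
      ≡ 0 [MOD p] := by
  have : Fact p.Prime := ⟨hp⟩
  have hsum := sum_choose_filter_mod_eq_of_modEq (K := ZMod p) (m' := a) a hr.ne' (by omega)
    (by rwa [ZMod.card])
  rw [ZMod.card, sum_filter_range_succ_eq _ _ hr, sum_filter_range_succ_eq _ _ (by omega),
    filter_Ioo_mod_eq_eq_empty ha', sum_empty, if_pos (show r % (p - 1) = a % (p - 1) from hra),
    if_pos rfl, Nat.choose_self, Nat.choose_self] at hsum
  rw [← ZMod.natCast_eq_natCast_iff, Nat.cast_sum]
  simpa using hsum
end

section
/- Let p be a prime, let a be in {3,...,p-1}, and let r be an integer with r ≥ 2 and r ≡ a (mod p-1). If the sum of the base-p digits of r-2 is less than p, then the sum of the base-p digits of r-1 is less than p and the sum of the base-p digits of r is less than p. -/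
/-!
The base-`p` digit sum of `n` is congruent to `n` modulo `p - 1`, and it grows by at most one
from `n` to `n + 1`, since a carry only lowers it. A digit sum below `p` that is congruent to some
`c` with `0 < c < p - 1` must therefore equal `c`; so the digit sum of `r - 2` is exactly `a - 2`,
and those of `r - 1` and `r` are at most `a - 1` and `a`, both below `p`.
-/

namespace Nat

theorem digits_sum_eq_mod_add_digits_sum_div (b n : ℕ) :
    (digits b n).sum = n % b + (digits b (n / b)).sum := by
  rcases eq_zero_or_pos n with rfl | hn
  · simp
  match b with
  | 0 => simp [digits_zero_succ' hn.ne']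
  | 1 => simp [mod_one]
  | b + 2 => rw [digits_def' (by omega) hn, List.sum_cons]

theorem digits_sum_succ_le (b n : ℕ) : (digits b (n + 1)).sum ≤ (digits b n).sum + 1 := by
  obtain _ | _ | b := b
  · rcases n with _ | n <;> simp [digits_zero_succ]
  · simp
  set B := b + 2
  induction n using Nat.strong_induction_on with
  | _ n ih =>
    have hB : 0 < B := by omega
    have hsplit : n + 1 = (n % B + 1) + B * (n / B) := by
      rw [add_right_comm, mod_add_div]
    rw [digits_sum_eq_mod_add_digits_sum_div _ (n + 1), digits_sum_eq_mod_add_digits_sum_div _ n]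
    rcases Nat.lt_or_eq_of_le (mod_lt n hB) with hlt | hcarry
    · rw [hsplit, add_mul_div_left _ _ hB, add_mul_mod_self_left, div_eq_of_lt hlt,
        mod_eq_of_lt hlt, zero_add]
      omega
    · have hpos : 0 < n := by omega
      have hrec := ih (n / B) (div_lt_self hpos (by omega))
      have hmul : n + 1 = B * (n / B + 1) := by
        rw [mul_add_one, hsplit, show n % B + 1 = B from hcarry, add_comm]
      rw [hmul, Nat.mul_div_cancel_left _ hB, mul_mod_right]
      omega

theorem digits_sum_eq_of_modEq {b n c : ℕ} (hc : 0 < c) (hcb : c < b - 1)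
    (hn : n ≡ c [MOD b - 1]) (hs : (digits b n).sum < b) : (digits b n).sum = c := by
  have hmod : b % (b - 1) = 1 := by
    obtain ⟨m, rfl⟩ : ∃ m, b = m + 1 := ⟨b - 1, by omega⟩
    rw [Nat.add_sub_cancel, Nat.add_mod_left, mod_eq_of_lt (by omega)]
  have hsum : (digits b n).sum % (b - 1) = c := by
    have hmodEq := (modEq_digits_sum (b - 1) b hmod n).symm.trans hn
    rwa [ModEq, mod_eq_of_lt hcb] at hmodEq
  have hdecomp := mod_add_div (digits b n).sum (b - 1)
  rcases eq_zero_or_pos ((digits b n).sum / (b - 1)) with hq | hq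
  · rw [hq] at hdecomp; omega
  · have hmul := Nat.le_mul_of_pos_right (b - 1) hq
    omega

end Nat

theorem digit_sum_minimality_general (p : ℕ) (a r : ℕ)
    (ha : 3 ≤ a) (ha' : a ≤ p - 1) (hr : 2 ≤ r) (hra : r ≡ a [MOD p - 1])
    (h : (Nat.digits p (r - 2)).sum < p) :
    (Nat.digits p (r - 1)).sum < p ∧ (Nat.digits p r).sum < p := by
  have hra₂ : r - 2 ≡ a - 2 [MOD p - 1] :=
    Nat.ModEq.add_right_cancel' 2 <| by rwa [Nat.sub_add_cancel hr, Nat.sub_add_cancel (by omega)]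
  have hsum₂ : (Nat.digits p (r - 2)).sum = a - 2 :=
    Nat.digits_sum_eq_of_modEq (by omega) (by omega) hra₂ h
  have hsum₁ := Nat.digits_sum_succ_le p (r - 2)
  have hsum₀ := Nat.digits_sum_succ_le p (r - 1)
  rw [show r - 2 + 1 = r - 1 by omega] at hsum₁
  rw [show r - 1 + 1 = r by omega] at hsum₀
  omega

/-- For a prime `p`, `a ∈ {3,…,p-1}` and `r ≥ 2` with `r ≡ a (mod p-1)`:
if the base-`p` digit sum of `r-2` is less than `p`, then so are the digit sums
of `r-1` and of `r`. -/
theorem digit_sum_minimality (p : ℕ) (hp : p.Prime) (a r : ℕ)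
    (ha : 3 ≤ a) (ha' : a ≤ p - 1) (hr : 2 ≤ r) (hra : r ≡ a [MOD p - 1])
    (h : (Nat.digits p (r - 2)).sum < p) :
    (Nat.digits p (r - 1)).sum < p ∧ (Nat.digits p r).sum < p :=
  digit_sum_minimality_general p a r ha ha' hr hra h
end

section
/- Let p be a prime, r ≥ p+1 an integer, and let F(X,Y) = Σ_{0 ≤ j ≤ r} c_j X^{r-j} Y^j be a homogeneous polynomial of degree r over F_p such that any two indices j, k with c_j ≠ 0 and c_k ≠ 0 satisfy j ≡ k (mod p-1). Then θ := X^p Y - X Y^p divides F in F_p[X,Y] if and only if c_0 = 0, c_r = 0, and Σ_{j} c_j = 0 in F_p. -/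
/-!
Evaluating at `(1,0)`, `(0,1)` and `(1,1)`, where `θ` vanishes, shows that the three conditions
are necessary. Conversely `θ = XY(X^(p-1) - Y^(p-1))`, so modulo `θ` the monomials
`X^(r-j) Y^j` with `0 < j < r` depend only on `j mod (p-1)`; if all nonzero `c j` lie in one
class, `F` is congruent to `(∑ c j) X^(r-k) Y^k = 0`.
-/

open MvPolynomial Finset

noncomputable section

variable {R : Type*} [CommRing R]

theorem mul_pow_sub_dvd_monomial_sub_of_le (x y : R) {q r j k : ℕ} (hj : 0 < j) (hjk : j ≤ k)
    (hk : k < r) (hmod : j % q = k % q) :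
    x ^ (q + 1) * y - x * y ^ (q + 1) ∣ x ^ (r - j) * y ^ j - x ^ (r - k) * y ^ k := by
  obtain ⟨t, ht⟩ := (Nat.modEq_iff_dvd' hjk).mp hmod
  obtain ⟨a, ha⟩ : ∃ a, r - k = a + 1 := ⟨r - k - 1, by omega⟩
  obtain ⟨b, rfl⟩ : ∃ b, j = b + 1 := ⟨j - 1, by omega⟩
  have hrj : r - (b + 1) = a + 1 + q * t := by omega
  have hk' : k = b + 1 + q * t := by omega
  have htheta : x ^ (q + 1) * y - x * y ^ (q + 1) = x * y * (x ^ q - y ^ q) := by ring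
  have hdiff : x ^ (a + 1 + q * t) * y ^ (b + 1) - x ^ (a + 1) * y ^ (b + 1 + q * t) =
      x * y * (x ^ a * y ^ b * ((x ^ q) ^ t - (y ^ q) ^ t)) := by ring
  rw [hrj, ha, hk', htheta, hdiff]
  exact mul_dvd_mul_left _ (dvd_mul_of_dvd_right (sub_dvd_pow_sub_pow _ _ t) _)

theorem mul_pow_sub_dvd_monomial_sub (x y : R) {q r j k : ℕ} (hj : 0 < j) (hjr : j < r)
    (hk : 0 < k) (hkr : k < r) (hmod : j % q = k % q) :
    x ^ (q + 1) * y - x * y ^ (q + 1) ∣ x ^ (r - j) * y ^ j - x ^ (r - k) * y ^ k := by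
  rcases le_total j k with hjk | hkj
  · exact mul_pow_sub_dvd_monomial_sub_of_le x y hj hjk hkr hmod
  · exact dvd_sub_comm.mp (mul_pow_sub_dvd_monomial_sub_of_le x y hk hkj hjr hmod.symm)

variable (R) in
def theta (p : ℕ) : MvPolynomial (Fin 2) R := X 0 ^ p * X 1 - X 0 * X 1 ^ p

def binaryForm (r : ℕ) (c : ℕ → R) : MvPolynomial (Fin 2) R :=
  ∑ j ∈ range (r + 1), C (c j) * X 0 ^ (r - j) * X 1 ^ j

theorem eval_binaryForm (v : Fin 2 → R) (r : ℕ) (c : ℕ → R) :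
    eval v (binaryForm r c) = ∑ j ∈ range (r + 1), c j * v 0 ^ (r - j) * v 1 ^ j := by
  simp [binaryForm]

theorem binaryForm_eq_sum_mul_sub (r k : ℕ) (c : ℕ → R) :
    binaryForm r c =
      ∑ j ∈ range (r + 1), C (c j) * (X 0 ^ (r - j) * X 1 ^ j - X 0 ^ (r - k) * X 1 ^ k)
        + C (∑ j ∈ range (r + 1), c j) * (X 0 ^ (r - k) * X 1 ^ k) := by
  simp only [binaryForm, map_sum, sum_mul, ← sum_add_distrib]
  exact sum_congr rfl fun j _ => by ring

theorem coeff_conditions_of_theta_dvd {p : ℕ} (hp : p ≠ 0) {r : ℕ} {c : ℕ → R}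
    (h : theta R p ∣ binaryForm r c) :
    c 0 = 0 ∧ c r = 0 ∧ ∑ j ∈ range (r + 1), c j = 0 := by
  have hvanish : ∀ v : Fin 2 → R, v 0 ^ p * v 1 - v 0 * v 1 ^ p = 0 →
      ∑ j ∈ range (r + 1), c j * v 0 ^ (r - j) * v 1 ^ j = 0 := fun v hv => by
    have hθ : eval v (theta R p) = 0 := by simpa [theta] using hv
    rw [← eval_binaryForm, ← zero_dvd_iff, ← hθ]
    exact map_dvd (eval v) h
  refine ⟨?_, ?_, ?_⟩
  · have := hvanish ![1, 0] (by simp [zero_pow hp])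
    rw [sum_eq_single 0 (fun j _ hj => by simp [zero_pow hj]) (by simp)] at this
    simpa using this
  · have := hvanish ![0, 1] (by simp [zero_pow hp])
    rw [sum_eq_single r (fun j hj hjr => by simp [zero_pow (show r - j ≠ 0 by grind)])
      (by simp)] at this
    simpa using this
  · simpa using hvanish ![1, 1] (by simp)

theorem theta_dvd_binaryForm {q r : ℕ} {c : ℕ → R} (h0 : c 0 = 0) (hr : c r = 0)
    (hsum : ∑ j ∈ range (r + 1), c j = 0)
    (hmod : ∀ j ≤ r, ∀ k ≤ r, c j ≠ 0 → c k ≠ 0 → j % q = k % q) :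
    theta R (q + 1) ∣ binaryForm r c := by
  by_cases hzero : ∀ j ∈ range (r + 1), c j = 0
  · rw [binaryForm, sum_eq_zero fun j hj => by simp [hzero j hj]]
    exact dvd_zero _
  push Not at hzero
  obtain ⟨k, hk, hck⟩ := hzero
  have hpos_lt : ∀ j ≤ r, c j ≠ 0 → 0 < j ∧ j < r := fun j hj hcj =>
    ⟨Nat.pos_of_ne_zero (by rintro rfl; exact hcj h0),
      lt_of_le_of_ne hj (by rintro rfl; exact hcj hr)⟩
  rw [binaryForm_eq_sum_mul_sub r k, hsum, map_zero, zero_mul, add_zero]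
  refine dvd_sum fun j hj => ?_
  rw [mem_range_succ_iff] at hj hk
  by_cases hcj : c j = 0
  · simp [hcj]
  obtain ⟨hj0, hjr⟩ := hpos_lt j hj hcj
  obtain ⟨hk0, hkr⟩ := hpos_lt k hk hck
  exact dvd_mul_of_dvd_right
    (mul_pow_sub_dvd_monomial_sub _ _ hj0 hjr hk0 hkr (hmod j hj k hk hcj hck)) _

end

theorem theta_dvd_iff_general (p : ℕ) (hp : p.Prime) (r : ℕ)
    (c : ℕ → ZMod p)
    (hc : ∀ j ≤ r, ∀ k ≤ r, c j ≠ 0 → c k ≠ 0 → j % (p - 1) = k % (p - 1)) :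
    ((X 0 ^ p * X 1 - X 0 * X 1 ^ p : MvPolynomial (Fin 2) (ZMod p)) ∣
        ∑ j ∈ Finset.range (r + 1), C (c j) * X 0 ^ (r - j) * X 1 ^ j) ↔
      (c 0 = 0 ∧ c r = 0 ∧ ∑ j ∈ Finset.range (r + 1), c j = 0) := by
  refine ⟨coeff_conditions_of_theta_dvd hp.ne_zero, fun ⟨h0, hr, hsum⟩ => ?_⟩
  obtain ⟨q, rfl⟩ : ∃ q, p = q + 1 := ⟨p - 1, (Nat.succ_pred_eq_of_pos hp.pos).symm⟩
  exact theta_dvd_binaryForm h0 hr hsum hc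

/-- Criterion for divisibility by `θ = X^p Y - X Y^p` of a homogeneous polynomial of
degree `r ≥ p+1` whose nonzero coefficients all lie in a single residue class mod `p-1`. -/
theorem theta_dvd_iff (p : ℕ) (hp : p.Prime) (r : ℕ) (hr : p + 1 ≤ r)
    (c : ℕ → ZMod p)
    (hc : ∀ j ≤ r, ∀ k ≤ r, c j ≠ 0 → c k ≠ 0 → j % (p - 1) = k % (p - 1)) :
    ((X 0 ^ p * X 1 - X 0 * X 1 ^ p : MvPolynomial (Fin 2) (ZMod p)) ∣
        ∑ j ∈ Finset.range (r + 1), C (c j) * X 0 ^ (r - j) * X 1 ^ j) ↔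
      (c 0 = 0 ∧ c r = 0 ∧ ∑ j ∈ Finset.range (r + 1), c j = 0) :=
  theta_dvd_iff_general p hp r c hc
end

section
/- Let p be a prime and r a positive integer whose sum of base-p digits is at least p. Then the p+1 polynomials X^r, Y^r, and (kX+Y)^r for k in F_p^* are linearly independent over F_p in the polynomial ring F_p[X,Y]. -/
/-!
Dehomogenising by `X ↦ 1, Y ↦ X` turns a relation `A X^r + B Y^r + ∑ c_k (kX + Y)^r = 0` into
`A + B X^r + ∑ c_k (X + k)^r = 0` in `F_p[X]`, whose coefficient of `X^(r-i)` for `0 < i < r` is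
`C(r,i) ∑ c_k k^i`. By Lucas's theorem every `s ≤ Σ(r)` is the digit sum `Σ(i)` of some `i` with
`p ∤ C(r,i)`, and `k^i = k^Σ(i)` because `k^p = k`. Taking `s = 1, …, p-1` (such `i` lie strictly
between `0` and `r` since `Σ(r) ≥ p`) gives the power sums `∑ c_k k^j = 0` for `1 ≤ j ≤ p-1`,
which force `c = 0` by orthogonality of the characters `k ↦ k^j` of `F_p^*`. Then `A = B = 0`.
-/

open Finset

theorem Nat.digits_sum_add_mul {b a m : ℕ} (hb : 1 < b) (ha : a < b) :
    (Nat.digits b (a + b * m)).sum = a + (Nat.digits b m).sum := by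
  by_cases h : a = 0 ∧ m = 0
  · simp [h]
  · rw [Nat.digits_add b hb a m ha (by tauto), List.sum_cons]

theorem pow_ofDigits_eq_pow_sum {M : Type*} [Monoid M] {x : M} {b : ℕ} (hx : x ^ b = x)
    (L : List ℕ) : x ^ Nat.ofDigits b L = x ^ L.sum := by
  induction L with
  | nil => simp [Nat.ofDigits]
  | cons d L ih => rw [Nat.ofDigits_cons, List.sum_cons, pow_add, pow_mul, hx, ih, pow_add]

theorem pow_digits_sum_eq_pow {M : Type*} [Monoid M] {x : M} {b : ℕ} (hx : x ^ b = x) (n : ℕ) :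
    x ^ (Nat.digits b n).sum = x ^ n := by
  rw [← pow_ofDigits_eq_pow_sum hx, Nat.ofDigits_digits]

namespace ZMod

variable {p : ℕ} [Fact p.Prime]

theorem natCast_choose_ne_zero {a b : ℕ} (ha : a < p) (hb : b ≤ a) :
    (a.choose b : ZMod p) ≠ 0 := by
  intro h0
  have h := congrArg (Nat.cast : ℕ → ZMod p) (Nat.choose_mul_factorial_mul_factorial hb)
  rw [Nat.cast_mul, Nat.cast_mul, h0, zero_mul, zero_mul, eq_comm,
    ZMod.natCast_eq_zero_iff, (Fact.out : p.Prime).dvd_factorial] at h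
  omega

theorem natCast_choose_add_mul {a b m n : ℕ} (ha : a < p) (hb : b < p) :
    ((a + p * m).choose (b + p * n) : ZMod p) = a.choose b * m.choose n := by
  have hp := (Fact.out : p.Prime).pos
  rw [← Nat.cast_mul, ZMod.natCast_eq_natCast_iff]
  convert Choose.choose_modEq_choose_mod_mul_choose_div_nat using 3 <;>
    simp [Nat.add_mul_div_left _ _ hp, Nat.mod_eq_of_lt, Nat.div_eq_of_lt, *]

theorem exists_digits_sum_eq_natCast_choose_ne_zero (r s : ℕ)
    (hs : s ≤ (Nat.digits p r).sum) :
    ∃ i, (Nat.digits p i).sum = s ∧ (r.choose i : ZMod p) ≠ 0 := by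
  have hp := (Fact.out : p.Prime).one_lt
  induction r using Nat.strong_induction_on generalizing s with
  | _ r ih =>
  obtain rfl | hr := Nat.eq_zero_or_pos r
  · exact ⟨0, by simp at hs ⊢; omega, by simp⟩
  obtain ⟨a, m, ha, rfl⟩ : ∃ a m, a < p ∧ r = a + p * m :=
    ⟨_, _, Nat.mod_lt r (by omega), (Nat.mod_add_div r p).symm⟩
  have hm : m < a + p * m := by nlinarith
  rw [Nat.digits_sum_add_mul hp ha] at hs
  obtain ⟨i, hi, hchoose⟩ := ih m hm (s - min s a) (by omega)
  refine ⟨min s a + p * i, ?_, ?_⟩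
  · rw [Nat.digits_sum_add_mul hp (by omega), hi]
    omega
  · rw [natCast_choose_add_mul ha (by omega)]
    exact mul_ne_zero (natCast_choose_ne_zero ha (min_le_right _ _)) hchoose

end ZMod

theorem sum_Icc_pow_of_pow_eq_one {R : Type*} [CommRing R] [IsDomain R] [DecidableEq R] {x : R}
    {n : ℕ} (hx : x ^ n = 1) : ∑ j ∈ Icc 1 n, x ^ j = if x = 1 then (n : R) else 0 := by
  split_ifs with h1
  · simp [h1]
  · have h := geom_sum_Ico_mul x (Nat.le_add_left 1 n)
    rw [Ico_add_one_right_eq_Icc, pow_succ, hx, one_mul, pow_one, sub_self] at h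
    exact (mul_eq_zero.1 h).resolve_right (sub_ne_zero.2 h1)

theorem eq_zero_of_forall_sum_mul_pow_eq_zero {K ι : Type*} [Field K] {s : Finset ι}
    {v c : ι → K} {n : ℕ} (hn : (n : K) ≠ 0) (hv : ∀ k ∈ s, v k ^ n = 1)
    (hinj : Set.InjOn v s) (h : ∀ j ∈ Icc 1 n, ∑ k ∈ s, c k * v k ^ j = 0) :
    ∀ k ∈ s, c k = 0 := by
  classical
  intro k' hk'
  have hn0 : n ≠ 0 := by
    rintro rfl
    simp at hn
  have hv' : v k' ≠ 0 := fun h0 => by simpa [h0, zero_pow hn0] using hv k' hk'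
  have hinner : ∀ k ∈ s, ∑ j ∈ Icc 1 n, (v k / v k') ^ j = if k = k' then (n : K) else 0 := by
    intro k hk
    rw [sum_Icc_pow_of_pow_eq_one (by rw [div_pow, hv k hk, hv k' hk', div_one]),
      div_eq_one_iff_eq hv', hinj.eq_iff hk hk']
  have key : (n : K) * c k' = 0 := calc
    (n : K) * c k' = ∑ k ∈ s, c k * ∑ j ∈ Icc 1 n, (v k / v k') ^ j := by
      rw [sum_congr rfl fun k hk => congrArg (c k * ·) (hinner k hk)]
      simp [hk', mul_comm]
    _ = ∑ j ∈ Icc 1 n, (v k')⁻¹ ^ j * ∑ k ∈ s, c k * v k ^ j := by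
      simp_rw [mul_sum]
      rw [sum_comm]
      refine sum_congr rfl fun k _ => sum_congr rfl fun j _ => ?_
      rw [div_pow, inv_pow]
      ring
    _ = 0 := sum_eq_zero fun j hj => by rw [h j hj, mul_zero]
  exact (mul_eq_zero.1 key).resolve_left hn

theorem ZMod.eq_zero_of_forall_sum_mul_natCast_pow_eq_zero {p : ℕ} [Fact p.Prime]
    {c : ℕ → ZMod p}
    (h : ∀ j ∈ Icc 1 (p - 1), ∑ k ∈ Icc 1 (p - 1), c k * (k : ZMod p) ^ j = 0) :
    ∀ k ∈ Icc 1 (p - 1), c k = 0 := by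
  have hp := (Fact.out : p.Prime).one_le
  refine eq_zero_of_forall_sum_mul_pow_eq_zero (by simp [Nat.cast_sub hp]) (fun k hk => ?_)
    (fun a ha b hb hab => ?_) h
  · rw [mem_Icc] at hk
    refine ZMod.pow_card_sub_one_eq_one ?_
    rw [Ne, ZMod.natCast_eq_zero_iff]
    exact Nat.not_dvd_of_pos_of_lt (by omega) (by omega)
  · simp only [coe_Icc, Set.mem_Icc] at ha hb
    rwa [ZMod.natCast_eq_natCast_iff', Nat.mod_eq_of_lt (by omega),
      Nat.mod_eq_of_lt (by omega)] at hab

namespace Polynomial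

theorem coeff_sum_C_mul_X_add_C_pow {R ι : Type*} [CommSemiring R] (s : Finset ι)
    (c a : ι → R) (r m : ℕ) :
    (∑ k ∈ s, C (c k) * (X + C (a k)) ^ r).coeff m =
      r.choose m * ∑ k ∈ s, c k * a k ^ (r - m) := by
  simp only [finsetSum_coeff, coeff_C_mul, coeff_X_add_C_pow, mul_sum]
  exact sum_congr rfl fun k _ => by ring

theorem sum_mul_pow_eq_zero_of_le_digits_sum {p : ℕ} [Fact p.Prime] {r : ℕ}
    (hdig : p ≤ (Nat.digits p r).sum) {ι : Type*} {s : Finset ι} {A B : ZMod p}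
    {c a : ι → ZMod p} (h : C A + C B * X ^ r + ∑ k ∈ s, C (c k) * (X + C (a k)) ^ r = 0)
    {j : ℕ} (hj0 : 0 < j) (hjp : j < p) : ∑ k ∈ s, c k * a k ^ j = 0 := by
  obtain ⟨i, hi, hchoose⟩ := ZMod.exists_digits_sum_eq_natCast_choose_ne_zero (p := p) r j (by omega)
  have hir : i ≤ r := by
    by_contra! hlt
    exact hchoose (by rw [Nat.choose_eq_zero_of_lt hlt, Nat.cast_zero])
  have hi0 : i ≠ 0 := by
    rintro rfl
    simp at hi
    omega
  have hir' : i ≠ r := by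
    rintro rfl
    omega
  have hcoeff := congrArg (coeff · (r - i)) h
  simp only [coeff_add, coeff_C, coeff_C_mul_X_pow, coeff_sum_C_mul_X_add_C_pow,
    coeff_zero] at hcoeff
  rw [if_neg (by omega), if_neg (by omega), zero_add, zero_add, Nat.sub_sub_self hir,
    Nat.choose_symm hir] at hcoeff
  simp_rw [← pow_digits_sum_eq_pow (ZMod.pow_card _) i, hi] at hcoeff
  exact (mul_eq_zero.1 hcoeff).resolve_left hchoose

end Polynomial

open MvPolynomial

/-- If the base-`p` digit sum of `r > 0` is at least `p`, then the `p+1` polynomials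
`X^r`, `Y^r`, and `(kX+Y)^r` for `k ∈ F_p^*`, are linearly independent over `F_p`. -/
theorem lin_indep_of_digit_sum_ge (p : ℕ) (hp : p.Prime) (r : ℕ) (hr : 0 < r)
    (hdig : p ≤ (Nat.digits p r).sum)
    (A B : ZMod p) (c : ℕ → ZMod p)
    (h : (C A * X 0 ^ r + C B * X 1 ^ r +
        ∑ k ∈ Finset.Icc 1 (p - 1),
          C (c k) * (C ((k : ZMod p)) * X 0 + X 1) ^ r :
        MvPolynomial (Fin 2) (ZMod p)) = 0) :
    A = 0 ∧ B = 0 ∧ ∀ k ∈ Finset.Icc 1 (p - 1), c k = 0 := by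
  have := Fact.mk hp
  have hpoly : Polynomial.C A + Polynomial.C B * Polynomial.X ^ r + ∑ k ∈ Icc 1 (p - 1),
      Polynomial.C (c k) * (Polynomial.X + Polynomial.C (k : ZMod p)) ^ r = 0 := by
    simpa [add_comm] using congrArg (aeval ![1, (Polynomial.X : Polynomial (ZMod p))]) h
  have hc : ∀ k ∈ Icc 1 (p - 1), c k = 0 :=
    ZMod.eq_zero_of_forall_sum_mul_natCast_pow_eq_zero fun j hj => by
      obtain ⟨hj1, hjp⟩ := mem_Icc.1 hj
      exact Polynomial.sum_mul_pow_eq_zero_of_le_digits_sum hdig hpoly hj1 (by omega)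
  rw [sum_eq_zero fun k hk => by rw [hc k hk, map_zero, zero_mul], add_zero] at hpoly
  have hA := congrArg (Polynomial.coeff · 0) hpoly
  have hB := congrArg (Polynomial.coeff · r) hpoly
  simp [Polynomial.coeff_C, hr.ne, hr.ne'] at hA hB
  exact ⟨hA, hB, hc⟩
end

section
/- Let p be a prime and r an integer with r ≥ p whose sum of base-p digits is less than p. Then the p+1 polynomials X^r, Y^r, and (kX+Y)^r for k in F_p^* are linearly dependent over F_p in the polynomial ring F_p[X,Y]. -/
/-!
Expanding binomially and summing over `k`, the coefficient of `X^j Y^(r-j)` in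
`∑ k, (kX + Y)^r` is `C(r, j) ∑ k k^j`. The power sum `∑ k k^j` over `F_p^*` vanishes unless
`p - 1 ∣ j`, and for `0 < j < r` with `p - 1 ∣ j` Kummer's theorem makes `p ∣ C(r, j)`: the digit
sums satisfy `s(j) ≥ p - 1` (as `s(j) ≡ j mod p - 1`) and `s(r - j) ≥ 1`, so
`s(j) + s(r - j) > s(r)`. Only `j = 0` and `j = r` survive, giving
`∑ k (kX + Y)^r = -Y^r - [p - 1 ∣ r] X^r`.
-/

open MvPolynomial

namespace Nat

theorem digits_sum_pos (b : ℕ) {n : ℕ} (hn : n ≠ 0) : 0 < (digits b n).sum :=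
  Nat.pos_of_ne_zero fun h =>
    getLast_digit_ne_zero b hn (List.sum_eq_zero_iff.mp h _ (List.getLast_mem _))

theorem sub_one_le_digits_sum {b n : ℕ} (hn : n ≠ 0) (h : b - 1 ∣ n) :
    b - 1 ≤ (digits b n).sum := by
  have hpos := digits_sum_pos b hn
  by_cases hb : b ≤ 2
  · omega
  have hmod : b % (b - 1) = 1 := by
    obtain ⟨c, rfl⟩ := Nat.exists_eq_add_of_le (show 3 ≤ b by omega)
    rw [show 3 + c - 1 = c + 2 by omega, show 3 + c = (c + 2) + 1 by omega, add_mod_left]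
    exact mod_eq_of_lt (by omega)
  exact le_of_dvd hpos ((dvd_iff_dvd_digits_sum (b - 1) b hmod n).mp h)

theorem Prime.dvd_choose_of_digits_sum_lt {p r j : ℕ} (hp : p.Prime)
    (hdig : (digits p r).sum < p) (hj0 : 0 < j) (hjr : j < r) (hdvd : p - 1 ∣ j) :
    p ∣ r.choose j := by
  have := Fact.mk hp
  by_contra hndvd
  have kummer := sub_one_mul_padicValNat_choose_eq_sub_sum_digits (p := p) hjr.le
  rw [padicValNat.eq_zero_of_not_dvd hndvd, mul_zero] at kummer
  have hj := sub_one_le_digits_sum hj0.ne' hdvd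
  have hrj := digits_sum_pos p (n := r - j) (by omega)
  omega

end Nat

theorem sum_smul_add_pow {ι S R : Type*} [CommSemiring S] [CommSemiring R] [Algebra S R]
    (s : Finset ι) (f : ι → S) (x y : R) (r : ℕ) :
    ∑ k ∈ s, (f k • x + y) ^ r =
      ∑ j ∈ Finset.range (r + 1), ((r.choose j : S) * ∑ k ∈ s, f k ^ j) • (x ^ j * y ^ (r - j)) := by
  simp_rw [add_pow, Finset.mul_sum, Finset.sum_smul]
  rw [Finset.sum_comm]
  refine Finset.sum_congr rfl fun j _ => Finset.sum_congr rfl fun k _ => ?_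
  simp only [Algebra.smul_def, map_mul, map_pow, map_natCast]
  ring

namespace ZMod

variable {p : ℕ} [Fact p.Prime]

theorem sum_Icc_pow (j : ℕ) :
    ∑ k ∈ Finset.Icc 1 (p - 1), (k : ZMod p) ^ j = if p - 1 ∣ j then -1 else 0 := by
  have hunits := FiniteField.sum_pow_units (ZMod p) j
  rw [card] at hunits
  rw [← hunits]
  refine Finset.sum_bij' (fun k hk ↦ Units.mk0 (k : ZMod p) ?_) (fun u _ ↦ (u : ZMod p).val)
    (fun _ _ ↦ Finset.mem_univ _) (fun u _ ↦ ?_) (fun k hk ↦ ?_)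
    (fun u _ ↦ Units.ext (natCast_zmod_val _)) (fun _ _ ↦ rfl)
  · rw [Ne, natCast_eq_zero_iff]
    exact Nat.not_dvd_of_pos_of_lt (by grind) (by grind)
  · have := val_lt (u : ZMod p)
    have := (val_ne_zero _).mpr u.ne_zero
    grind
  · simp [val_cast_of_lt (show k < p by grind)]

theorem choose_mul_sum_Icc_pow_eq_zero {r j : ℕ} (hdig : (Nat.digits p r).sum < p)
    (hj0 : 0 < j) (hjr : j < r) :
    (r.choose j : ZMod p) * ∑ k ∈ Finset.Icc 1 (p - 1), (k : ZMod p) ^ j = 0 := by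
  rw [sum_Icc_pow]
  split_ifs with hdvd
  · rw [(natCast_eq_zero_iff _ _).mpr
      ((Fact.out : p.Prime).dvd_choose_of_digits_sum_lt hdig hj0 hjr hdvd), zero_mul]
  · exact mul_zero _

theorem sum_Icc_smul_add_pow {R : Type*} [CommRing R] [Algebra (ZMod p) R] {r : ℕ}
    (hr : r ≠ 0) (hdig : (Nat.digits p r).sum < p) (x y : R) :
    ∑ k ∈ Finset.Icc 1 (p - 1), ((k : ZMod p) • x + y) ^ r =
      -((if p - 1 ∣ r then 1 else 0 : ZMod p) • x ^ r + y ^ r) := by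
  rw [sum_smul_add_pow, Finset.sum_eq_add_of_mem 0 r (by simp) (by simp) hr.symm]
  · rw [sum_Icc_pow, sum_Icc_pow, if_pos (dvd_zero _)]
    split_ifs <;> simp [add_comm]
  · intro j hj hne
    rw [choose_mul_sum_Icc_pow_eq_zero hdig (Nat.pos_of_ne_zero hne.1)
      ((Finset.mem_range_succ_iff.mp hj).lt_of_ne hne.2), zero_smul]

end ZMod

/-- If `r ≥ p` and the base-`p` digit sum of `r` is less than `p`, then the `p+1`
polynomials `X^r`, `Y^r`, `(kX+Y)^r` for `k ∈ F_p^*` are linearly dependent over `F_p`. -/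
theorem lin_dep_of_digit_sum_lt (p : ℕ) (hp : p.Prime) (r : ℕ) (hr : p ≤ r)
    (hdig : (Nat.digits p r).sum < p) :
    ∃ (A B : ZMod p) (c : ℕ → ZMod p),
      (A ≠ 0 ∨ B ≠ 0 ∨ ∃ k ∈ Finset.Icc 1 (p - 1), c k ≠ 0) ∧
      (C A * X 0 ^ r + C B * X 1 ^ r +
        ∑ k ∈ Finset.Icc 1 (p - 1),
          C (c k) * (C ((k : ZMod p)) * X 0 + X 1) ^ r :
        MvPolynomial (Fin 2) (ZMod p)) = 0 := by
  have := Fact.mk hp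
  refine ⟨if p - 1 ∣ r then 1 else 0, 1, fun _ => 1, Or.inr (Or.inl one_ne_zero), ?_⟩
  simp only [map_one, one_mul, C_mul']
  rw [ZMod.sum_Icc_smul_add_pow (hp.pos.trans_le hr).ne' hdig]
  exact add_neg_cancel _
end

section
/- Let p be a prime and let r_0, t be integers with 1 ≤ t ≤ r_0 - 1 and r_0 ≤ p - 3. Then the 3×3 determinant with rows (C(r_0,t), C(r_0,t+1), C(r_0,t+2)), (C(r_0,t-1), C(r_0,t), C(r_0,t+1)), (C(r_0,t-2), C(r_0,t-1), C(r_0,t)) is nonzero modulo p; in fact it equals the product over i=1,2,3, j=1,...,t, k=1,...,r_0-t of (i+j+k-1)/(i+j+k-2). -/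
/-!
With `r₀ = a + b` and `t = a`, both the determinant and the product equal
`2 C(a+b,a)³ (a+b+1)² (a+b+2) / ((a+1)² (a+2) (b+1)² (b+2))`. For the determinant, the relation
`C(n,k+1)(k+1) = C(n,k)(n-k)` makes every entry a rational multiple of `C(a+b,a)`; the product
telescopes successively in `i`, `k` and `j`. Since `a + b + 2 < p`, every factor of the numerator
is prime to `p`, which gives the statement modulo `p`.
-/

/-- Binomial coefficient `C(n, k)` for an integer lower index, vanishing for `k < 0`. -/
def chooseZ (n : ℕ) (k : ℤ) : ℤ := if k < 0 then 0 else n.choose k.toNat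

/-- The 3×3 binomial matrix with rows `(C(r₀,t), C(r₀,t+1), C(r₀,t+2))`,
`(C(r₀,t-1), C(r₀,t), C(r₀,t+1))`, `(C(r₀,t-2), C(r₀,t-1), C(r₀,t))`. -/
def binomMatrix (r0 : ℕ) (t : ℤ) : Matrix (Fin 3) (Fin 3) ℤ :=
  Matrix.of ![![chooseZ r0 t, chooseZ r0 (t + 1), chooseZ r0 (t + 2)],
    ![chooseZ r0 (t - 1), chooseZ r0 t, chooseZ r0 (t + 1)],
    ![chooseZ r0 (t - 2), chooseZ r0 (t - 1), chooseZ r0 t]]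

open Finset

theorem prod_Icc_div_pred {G₀ : Type*} [CommGroupWithZero G₀] (f : ℕ → G₀)
    (hf : ∀ k, f k ≠ 0) (n : ℕ) : ∏ k ∈ Icc 1 n, f k / f (k - 1) = f n / f 0 := by
  induction n with
  | zero => simp [hf 0]
  | succ n ih =>
    rw [prod_Icc_succ_top (by omega), ih, Nat.add_sub_cancel, mul_comm,
      div_mul_div_cancel₀ (hf n)]

theorem chooseZ_natCast (n k : ℕ) : chooseZ n k = n.choose k := by
  simp [chooseZ]

-- Valid for every integer `k`, so the entries `C(r₀, t - 2)` vanishing at `t = 1` need no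
-- separate treatment.
theorem chooseZ_succ_mul (n : ℕ) (k : ℤ) :
    chooseZ n (k + 1) * (k + 1) = chooseZ n k * (n - k) := by
  rcases lt_trichotomy k (-1) with hk | rfl | hk
  · simp [chooseZ, show k + 1 < 0 by omega, show k < 0 by omega]
  · simp [chooseZ]
  · lift k to ℕ using (by omega)
    rw [← Nat.cast_succ, chooseZ_natCast, chooseZ_natCast]
    rcases le_or_gt k n with hkn | hnk
    · exact_mod_cast Nat.choose_succ_right_eq n k
    · simp [Nat.choose_eq_zero_of_lt hnk, Nat.choose_eq_zero_of_lt (by omega : n < k + 1)]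

theorem det_binomMatrix_mul (a b : ℕ) :
    (binomMatrix (a + b) a).det * ((a + 1) ^ 2 * (a + 2) * (b + 1) ^ 2 * (b + 2)) =
      2 * (a + b).choose a ^ 3 * (a + b + 1) ^ 2 * (a + b + 2) := by
  have step (k : ℤ) :
      (chooseZ (a + b) (k + 1) : ℚ) * (k + 1) = chooseZ (a + b) k * (a + b - k) := by
    exact_mod_cast chooseZ_succ_mul (a + b) k
  have h₁ := step a
  have h₂ := step (a + 1)
  have h₃ := step (a - 1)
  have h₄ := step (a - 2)
  rw [sub_add_cancel] at h₃
  rw [show (a : ℤ) - 2 + 1 = a - 1 by ring] at h₄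
  rw [add_assoc, one_add_one_eq_two] at h₂
  rw [Matrix.det_fin_three]
  simp only [binomMatrix, Matrix.of_apply, Matrix.cons_val', Matrix.cons_val_zero,
    Matrix.cons_val_one, Matrix.head_cons, Matrix.empty_val', Matrix.cons_val_fin_one,
    Matrix.head_fin_const, Matrix.cons_val_two, Matrix.tail_cons]
  rw [← chooseZ_natCast]
  qify
  push_cast at h₁ h₂ h₃ h₄ ⊢
  generalize (chooseZ (a + b) a : ℚ) = x₀ at *
  generalize (chooseZ (a + b) (a + 1) : ℚ) = x₁ at *
  generalize (chooseZ (a + b) (a + 2) : ℚ) = x₂ at *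
  generalize (chooseZ (a + b) (a - 1) : ℚ) = y₁ at *
  generalize (chooseZ (a + b) (a - 2) : ℚ) = y₂ at *
  have ha₁ : (a : ℚ) + 1 ≠ 0 := by positivity
  have ha₂ : (a : ℚ) + 2 ≠ 0 := by positivity
  have hb₁ : (b : ℚ) + 1 ≠ 0 := by positivity
  have hb₂ : (b : ℚ) + 2 ≠ 0 := by positivity
  obtain rfl : x₁ = x₀ * b / (a + 1) := by rw [eq_div_iff ha₁]; linarith
  obtain rfl : x₂ = x₀ * b / (a + 1) * (b - 1) / (a + 2) := by rw [eq_div_iff ha₂]; linarith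
  obtain rfl : y₁ = x₀ * a / (b + 1) := by rw [eq_div_iff hb₁]; linarith
  obtain rfl : y₂ = x₀ * a / (b + 1) * (a - 1) / (b + 2) := by rw [eq_div_iff hb₂]; linarith
  field_simp
  ring

theorem prod_Icc_div_shift_one (x : ℚ) (hx : 0 < x) (n : ℕ) :
    ∏ k ∈ Icc 1 n, (x + k) / (x + k - 1) = (x + n) / x := by
  have := prod_Icc_div_pred (fun k : ℕ => x + k) (fun k => by positivity) n
  simp only [CharP.cast_eq_zero, add_zero] at this
  rw [← this]
  refine prod_congr rfl fun k hk => ?_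
  rw [Nat.cast_sub (mem_Icc.1 hk).1]
  ring

theorem prod_Icc_div_shift_three (x : ℚ) (hx : 0 < x) (n : ℕ) :
    ∏ k ∈ Icc 1 n, (x + k + 2) / (x + k - 1) =
      (x + n) * (x + n + 1) * (x + n + 2) / (x * (x + 1) * (x + 2)) := by
  have := prod_Icc_div_pred (fun k : ℕ => (x + k) * (x + k + 1) * (x + k + 2))
    (fun k => by positivity) n
  simp only [CharP.cast_eq_zero, add_zero] at this
  rw [← this]
  refine prod_congr rfl fun k hk => ?_
  have hk : (1 : ℚ) ≤ k := by exact_mod_cast (mem_Icc.1 hk).1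
  rw [Nat.cast_sub (by exact_mod_cast hk), div_eq_div_iff (by linarith) (by positivity)]
  ring

theorem prod_Icc_rising_div (a b : ℕ) :
    ∏ j ∈ Icc 1 a, ((j : ℚ) + b) * (j + b + 1) * (j + b + 2) / (j * (j + 1) * (j + 2)) =
      2 * (a + b).choose a ^ 3 * (a + b + 1) ^ 2 * (a + b + 2) /
        ((a + 1) ^ 2 * (a + 2) * (b + 1) ^ 2 * (b + 2)) := by
  set Q : ℕ → ℚ := fun j => (j + b).choose j ^ 3 * (j + b + 1) ^ 2 * (j + b + 2) /
      ((j + 1) ^ 2 * (j + 2)) with hQ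
  have hQ₀ (j : ℕ) : Q j ≠ 0 := by
    have := Nat.choose_pos (Nat.le_add_right j b)
    positivity
  calc _ = ∏ j ∈ Icc 1 a, Q j / Q (j - 1) := prod_congr rfl fun j hj => ?_
    _ = Q a / Q 0 := prod_Icc_div_pred Q hQ₀ a
    _ = _ := by simp only [hQ, Nat.choose_zero_right]; push_cast; field_simp; ring
  obtain ⟨m, rfl⟩ := Nat.exists_eq_add_of_le' (mem_Icc.1 hj).1
  have hrec : ((m + 1 + b).choose (m + 1) : ℚ) = (m + b).choose m * (m + b + 1) / (m + 1) := by
    rw [eq_div_iff (by positivity), show m + 1 + b = m + b + 1 by omega]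
    exact_mod_cast (Nat.add_one_mul_choose_eq (m + b) m).symm.trans (mul_comm _ _)
  rw [eq_div_iff (hQ₀ _)]
  simp only [hQ, Nat.add_sub_cancel]
  push_cast
  rw [hrec]
  field_simp
  ring

theorem prod_box_eq (a b : ℕ) :
    ∏ i ∈ Icc (1 : ℕ) 3, ∏ j ∈ Icc (1 : ℕ) a, ∏ k ∈ Icc (1 : ℕ) b,
        (((i : ℚ) + j + k - 1) / ((i : ℚ) + j + k - 2)) =
      2 * (a + b).choose a ^ 3 * (a + b + 1) ^ 2 * (a + b + 2) /
        ((a + 1) ^ 2 * (a + 2) * (b + 1) ^ 2 * (b + 2)) := by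
  rw [← prod_Icc_rising_div, prod_comm]
  refine prod_congr rfl fun j hj => ?_
  have hj : (1 : ℚ) ≤ j := by exact_mod_cast (mem_Icc.1 hj).1
  rw [prod_comm, ← prod_Icc_div_shift_three _ (by linarith)]
  refine prod_congr rfl fun k hk => ?_
  have hk : (1 : ℚ) ≤ k := by exact_mod_cast (mem_Icc.1 hk).1
  convert prod_Icc_div_shift_one (j + k - 1) (by linarith) 3 using 1
  · refine prod_congr rfl fun i _ => ?_
    ring
  · ring

theorem det_binomMatrix_cast_ne_zero {p : ℕ} (hp : p.Prime) (a b : ℕ) (hab : a + b + 2 < p) :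
    ((binomMatrix (a + b) a).det : ZMod p) ≠ 0 := by
  have hsmall (n : ℕ) (hn₀ : n ≠ 0) (hn : n ≤ a + b + 2) : p.Coprime n :=
    Nat.coprime_of_lt_prime hn₀ (by omega) hp
  have hcop : p.Coprime (2 * (a + b).choose a ^ 3 * (a + b + 1) ^ 2 * (a + b + 2)) :=
    (((hsmall 2 two_ne_zero (by omega)).mul_right
      ((hp.coprime_choose_of_lt (by omega) le_self_add).pow_right 3)).mul_right
      ((hsmall (a + b + 1) (by omega) (by omega)).pow_right 2)).mul_right
      (hsmall (a + b + 2) (by omega) le_rfl)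
  intro h0
  have hM := congrArg (Int.cast : ℤ → ZMod p) (det_binomMatrix_mul a b)
  rw [Int.cast_mul, h0, zero_mul, eq_comm] at hM
  exact hp.coprime_iff_not_dvd.1 hcop ((ZMod.natCast_eq_zero_iff _ _).1 (by exact_mod_cast hM))

/-- Krattenthaler-type determinant evaluation: for `1 ≤ t ≤ r₀-1` and `r₀ ≤ p-3`, the
3×3 binomial determinant is nonzero mod `p` and equals the stated product of ratios. -/
theorem binomial_det_ne_zero (p : ℕ) (hp : p.Prime) (r0 t : ℕ)
    (ht : 1 ≤ t) (ht' : t ≤ r0 - 1) (hr0 : r0 ≤ p - 3) :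
    (((binomMatrix r0 (t : ℤ)).det : ZMod p) ≠ 0) ∧
      (((binomMatrix r0 (t : ℤ)).det : ℚ) =
        ∏ i ∈ Finset.Icc (1 : ℕ) 3, ∏ j ∈ Finset.Icc (1 : ℕ) t, ∏ k ∈ Finset.Icc (1 : ℕ) (r0 - t),
          (((i : ℚ) + j + k - 1) / ((i : ℚ) + j + k - 2))) := by
  obtain ⟨b, rfl⟩ := Nat.exists_eq_add_of_le (show t ≤ r0 by omega)
  refine ⟨det_binomMatrix_cast_ne_zero hp t b (by omega), ?_⟩
  rw [Nat.add_sub_cancel_left, prod_box_eq, eq_div_iff (by positivity)]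
  exact_mod_cast det_binomMatrix_mul t b
end

section
/- Let p ≥ 5 be a prime, let a be in {4,...,p+1}, and let r be an integer with r ≡ a (mod p-1) and r ≡ a (mod p) and r > (a-1)p. Then there exist integers β_j, indexed by the integers j with a-1 ≤ j < r-1 and j ≡ a-1 (mod p-1), such that β_j ≡ C(r,j) (mod p) for all such j, and for each n in {0,1,2,3} the sum Σ_{j ≥ n} C(j,n) β_j is congruent to 0 modulo p^{4-n}. -/
/-!
Take `β_j = C(r,j) + p y_j`. Since `C(j,n) C(r,j) = C(r,n) C(r-n,j-n)`, the sum with `β = C(r,·)`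
is `C(r,n)` times a lacunary sum of `C(r-n,·)` over a residue class mod `p - 1`. Modulo `p`,
the complete lacunary sum `∑_{i ≡ c} C(m,i)` is the character sum `-∑_{t ∈ 𝔽_p^×} t^{-c} (1+t)^m`,
so it only depends on `m` mod `p - 1`; comparing `m = r - n` with `a - n`, whose sums differ only
by boundary terms that agree mod `p`, shows that the partial sum vanishes mod `p`.
So every weighted sum is `p t_n`, and it remains to choose `y` supported on the three indices
`a-1, a-1+(p-1), a-1+2(p-1)`: the resulting system for `y` modulo `p³, p², p` is triangular
with diagonal `1, -(p-1), (p-1)²`, all units mod `p`.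
-/

open Finset

theorem Nat.dvd_add_mul_sub_one_iff_modEq {n : ℕ} (hn : 0 < n) (i c : ℕ) :
    n ∣ i + c * (n - 1) ↔ i ≡ c [MOD n] := by
  have hcn : c * (n - 1) + c = c * n := by
    rw [← Nat.mul_add_one, Nat.sub_add_cancel hn]
  rw [← Nat.modEq_zero_iff_dvd, ← (Nat.ModEq.refl c).add_iff_right, zero_add, add_assoc, hcn]
  unfold Nat.ModEq
  rw [Nat.add_mul_mod_self_right]

theorem ZMod.pow_eq_pow_of_modEq_sub_one {p : ℕ} [Fact p.Prime] (x : ZMod p) {m m' : ℕ}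
    (hm : m ≠ 0) (hm' : m' ≠ 0) (h : m ≡ m' [MOD p - 1]) : x ^ m = x ^ m' := by
  rcases eq_or_ne x 0 with rfl | hx
  · rw [zero_pow hm, zero_pow hm']
  · have hred (k : ℕ) : x ^ k = x ^ (k % (p - 1)) := by
      conv_lhs => rw [← Nat.mod_add_div k (p - 1), pow_add, pow_mul,
        ZMod.pow_card_sub_one_eq_one hx, one_pow, mul_one]
    rw [hred m, hred m', h]

-- `t ^ (c * (p - 2))` is `t⁻¹ ^ c` with a natural exponent
theorem sum_choose_filter_modEq_eq_neg_sum_units (p : ℕ) [Fact p.Prime] (m c : ℕ) :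
    ∑ i ∈ (range (m + 1)).filter (· ≡ c [MOD p - 1]), (m.choose i : ZMod p) =
      -∑ t : (ZMod p)ˣ, (t : ZMod p) ^ (c * (p - 2)) * (1 + t) ^ m := by
  classical
  have hp : 0 < p - 1 := Nat.sub_pos_of_lt (Fact.out : p.Prime).one_lt
  rw [show p - 2 = p - 1 - 1 by omega]
  simp_rw [add_comm (1 : ZMod p), add_pow, one_pow, mul_one, mul_sum, sum_comm (γ := (ZMod p)ˣ)]
  rw [sum_filter, ← sum_neg_distrib]
  refine sum_congr rfl fun i _ => ?_
  have hsum := FiniteField.sum_pow_units (ZMod p) (i + c * (p - 1 - 1))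
  simp only [ZMod.card, Nat.dvd_add_mul_sub_one_iff_modEq hp] at hsum
  simp_rw [← mul_assoc, ← pow_add, ← sum_mul, add_comm (c * _), hsum]
  split_ifs <;> simp

theorem sum_choose_filter_modEq_eq_of_modEq (p : ℕ) [Fact p.Prime] (c : ℕ) {m m' : ℕ}
    (hm : m ≠ 0) (hm' : m' ≠ 0) (h : m ≡ m' [MOD p - 1]) :
    ∑ i ∈ (range (m + 1)).filter (· ≡ c [MOD p - 1]), (m.choose i : ZMod p) =
      ∑ i ∈ (range (m' + 1)).filter (· ≡ c [MOD p - 1]), (m'.choose i : ZMod p) := by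
  simp_rw [sum_choose_filter_modEq_eq_neg_sum_units, ZMod.pow_eq_pow_of_modEq_sub_one _ hm hm' h]

theorem sum_choose_Ico_filter_modEq_eq_zero (p : ℕ) [Fact p.Prime] (hp3 : 3 ≤ p) {c m : ℕ}
    (hcp : c ≤ p) (hcm : c < m) (hmq : m ≡ c + 1 [MOD p - 1]) (hmp : m ≡ c + 1 [MOD p]) :
    ∑ i ∈ (Ico c (m - 1)).filter (· ≡ c [MOD p - 1]), (m.choose i : ZMod p) = 0 := by
  have hfull := sum_choose_filter_modEq_eq_of_modEq p c (by omega) (by omega : c + 1 ≠ 0) hmq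
  obtain ⟨k, rfl⟩ : ∃ k, m = k + 1 := ⟨m - 1, by omega⟩
  have hkq : k ≡ c [MOD p - 1] := Nat.ModEq.add_right_cancel' 1 hmq
  have hsucc (j : ℕ) (hj : j ≡ c [MOD p - 1]) : ¬ j + 1 ≡ c [MOD p - 1] := fun h => by
    have : 1 + c ≡ c [MOD p - 1] := by rw [add_comm]; exact (hj.add_right 1).symm.trans h
    rw [Nat.add_modEq_right_iff, Nat.dvd_one] at this
    omega
  -- below `c` the class only contains `c - (p - 1) ≤ 1`, where `C(k+1,i) ≡ C(c+1,i)` mod `p`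
  have hlow : ∀ i ∈ range c, (if i ≡ c [MOD p - 1] then ((k + 1).choose i : ZMod p) else 0) =
      if i ≡ c [MOD p - 1] then ((c + 1).choose i : ZMod p) else 0 := by
    intro i hi
    split_ifs with hic
    · have hdvd := (Nat.modEq_iff_dvd' (mem_range.mp hi).le).mp hic
      have := Nat.le_of_dvd (by simpa using mem_range.mp hi) hdvd
      have hi1 : i ≤ 1 := by omega
      interval_cases i
      · simp
      · simpa using (ZMod.natCast_eq_natCast_iff _ _ _).mpr hmp
    · rfl
  have hkc : (k + 1 : ZMod p) = c + 1 := by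
    exact_mod_cast (ZMod.natCast_eq_natCast_iff _ _ _).mpr hmp
  rw [sum_filter, sum_filter, sum_range_succ, sum_range_succ,
    ← sum_range_add_sum_Ico _ (by omega : c ≤ k), sum_range_succ, sum_range_succ,
    sum_congr rfl hlow, if_pos hkq, if_neg (hsucc k hkq), if_pos (Nat.ModEq.refl c),
    if_neg (hsucc c (Nat.ModEq.refl c)), Nat.choose_succ_self_right,
    Nat.choose_succ_self_right] at hfull
  push_cast at hfull
  rw [Nat.add_sub_cancel, sum_filter]
  linear_combination hfull - hkc

theorem sum_choose_mul_choose_Ico_filter_modEq (d r : ℕ) {n c k : ℕ} (hnc : n ≤ c) (hnk : n ≤ k) :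
    ∑ j ∈ (Ico c k).filter (· ≡ c [MOD d]), j.choose n * r.choose j =
      r.choose n * ∑ i ∈ (Ico (c - n) (k - n)).filter (· ≡ c - n [MOD d]), (r - n).choose i := by
  obtain ⟨c, rfl⟩ := Nat.exists_eq_add_of_le' hnc
  obtain ⟨k, rfl⟩ := Nat.exists_eq_add_of_le' hnk
  rw [sum_filter, sum_filter, mul_sum, ← sum_Ico_add']
  simp only [Nat.add_sub_cancel, (Nat.ModEq.refl n).add_iff_right]
  refine sum_congr rfl fun i _ => ?_
  rw [mul_comm, Nat.choose_mul (Nat.le_add_left n i), Nat.add_sub_cancel, mul_ite, mul_zero]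

theorem choose_two_sub_two_mul_choose_two_add (j d : ℕ) :
    (j.choose 2 : ℤ) - 2 * (j + d).choose 2 + (j + 2 * d).choose 2 = d ^ 2 := by
  have h : ((j.choose 2 : ℚ) - 2 * (j + d).choose 2 + (j + 2 * d).choose 2) = d ^ 2 := by
    simp only [Nat.cast_choose_two]
    push_cast
    ring
  exact_mod_cast h

theorem exists_three_point_correction {p d : ℕ} (hd : d.Coprime p) (j₀ : ℕ) (t : ℕ → ℤ) :
    ∃ y₀ y₁ y₂ : ℤ, ∀ n ≤ 3, (p : ℤ) ^ (3 - n) ∣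
      t n + (j₀.choose n * y₀ + (j₀ + d).choose n * y₁ + (j₀ + 2 * d).choose n * y₂) := by
  obtain ⟨u, hu⟩ := Int.mod_coprime (hd.pow_right 2)
  obtain ⟨w, hw⟩ := Int.mod_coprime (hd.pow_left 2)
  push_cast at hu hw
  obtain ⟨c₁, hc₁⟩ : ∃ c : ℤ, (j₀ + d).choose 2 = c := ⟨_, rfl⟩
  obtain ⟨c₂, hc₂⟩ : ∃ c : ℤ, (j₀ + 2 * d).choose 2 = c := ⟨_, rfl⟩
  set γ := -t 0
  set B := u * (t 1 + γ * (j₀ + 2 * d))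
  set A := -w * (t 2 + γ * c₂ - B * (c₂ - c₁))
  -- `y = γ e₂ + B (e₁ - e₂) + A (e₀ - 2 e₁ + e₂)`: the `n`-th sum then involves only `γ`, `B`, `A`
  -- for `n = 0, 1, 2` successively, with coefficients `1, -d, d²`
  refine ⟨A, B - 2 * A, A - B + γ, fun n hn => ?_⟩
  interval_cases n
  · simp only [Nat.choose_zero_right]
    push_cast
    exact ⟨0, by ring⟩
  · have h : t 1 + (j₀.choose 1 * A + (j₀ + d).choose 1 * (B - 2 * A) +
        (j₀ + 2 * d).choose 1 * (A - B + γ)) = (t 1 + γ * (j₀ + 2 * d)) * (1 - d * u) := by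
      simp only [Nat.choose_one_right]
      push_cast
      ring
    rw [h]
    exact hu.dvd.mul_left _
  · have h : t 2 + (j₀.choose 2 * A + c₁ * (B - 2 * A) + c₂ * (A - B + γ))
        = (t 2 + γ * c₂ - B * (c₂ - c₁)) * (1 - d ^ 2 * w) := by
      have hdiff := choose_two_sub_two_mul_choose_two_add j₀ d
      rw [hc₁, hc₂] at hdiff
      linear_combination A * hdiff
    rw [hc₁, hc₂, pow_one, h]
    exact hw.dvd.mul_left _
  · simp

theorem prime_dvd_sum_choose_mul_choose_Ico_filter_modEq {p : ℕ} (hp : p.Prime) (hp3 : 3 ≤ p)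
    {a r n : ℕ} (hna : n < a) (hap : a ≤ p + 1) (har : a ≤ r) (hrq : r ≡ a [MOD p - 1])
    (hrp : r ≡ a [MOD p]) :
    (p : ℤ) ∣ ∑ j ∈ (Ico (a - 1) (r - 1)).filter (· ≡ a - 1 [MOD p - 1]),
      (j.choose n : ℤ) * r.choose j := by
  have := Fact.mk hp
  have hshift {q : ℕ} (h : r ≡ a [MOD q]) : r - n ≡ a - 1 - n + 1 [MOD q] := by
    refine Nat.ModEq.add_right_cancel' n ?_
    rwa [Nat.sub_add_cancel (by omega), show a - 1 - n + 1 + n = a by omega]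
  have hsum : ((∑ j ∈ (Ico (a - 1) (r - 1)).filter (· ≡ a - 1 [MOD p - 1]),
      j.choose n * r.choose j : ℕ) : ZMod p) = 0 := by
    rw [sum_choose_mul_choose_Ico_filter_modEq _ _ (by omega) (by omega), Nat.sub_right_comm r,
      Nat.cast_mul, Nat.cast_sum, sum_choose_Ico_filter_modEq_eq_zero p hp3 (by omega) (by omega)
        (hshift hrq) (hshift hrp), mul_zero]
  exact_mod_cast (ZMod.natCast_eq_zero_iff _ _).mp hsum

theorem sum_mul_add_ite_eq {R : Type*} [Semiring R] {F : Finset ℕ} (f : ℕ → R) {j₀ j₁ j₂ : ℕ}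
    (h₀ : j₀ ∈ F) (h₁ : j₁ ∈ F) (h₂ : j₂ ∈ F) (y₀ y₁ y₂ : R) :
    ∑ j ∈ F, f j * ((if j = j₀ then y₀ else 0) + (if j = j₁ then y₁ else 0) +
      (if j = j₂ then y₂ else 0)) = f j₀ * y₀ + f j₁ * y₁ + f j₂ * y₂ := by
  simp only [mul_add, sum_add_distrib, mul_ite, mul_zero, sum_ite_eq', if_pos h₀, if_pos h₁,
    if_pos h₂]

theorem exists_modEq_pow_dvd_sum_choose_mul {p d j₀ : ℕ} (hd : d.Coprime p) {F : Finset ℕ}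
    (h₀ : j₀ ∈ F) (h₁ : j₀ + d ∈ F) (h₂ : j₀ + 2 * d ∈ F) (b : ℕ → ℤ)
    (hb : ∀ n ≤ 3, (p : ℤ) ∣ ∑ j ∈ F, (j.choose n : ℤ) * b j) :
    ∃ β : ℕ → ℤ, (∀ j, β j ≡ b j [ZMOD p]) ∧
      ∀ n ≤ 3, (p : ℤ) ^ (4 - n) ∣ ∑ j ∈ F, (j.choose n : ℤ) * β j := by
  obtain ⟨y₀, y₁, y₂, hy⟩ := exists_three_point_correction hd j₀
    (fun n => (∑ j ∈ F, (j.choose n : ℤ) * b j) / p)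
  set y : ℕ → ℤ := fun j => (if j = j₀ then y₀ else 0) + (if j = j₀ + d then y₁ else 0) +
    (if j = j₀ + 2 * d then y₂ else 0)
  refine ⟨fun j => b j + p * y j, fun j => Int.modEq_iff_dvd.mpr ⟨-y j, by ring⟩, fun n hn => ?_⟩
  have hsum : ∑ j ∈ F, (j.choose n : ℤ) * (b j + p * y j) =
      p * ((∑ j ∈ F, (j.choose n : ℤ) * b j) / p + (j₀.choose n * y₀ +
        (j₀ + d).choose n * y₁ + (j₀ + 2 * d).choose n * y₂)) := by
    simp only [mul_add, sum_add_distrib, mul_left_comm _ (p : ℤ), ← mul_sum]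
    simp only [y]
    rw [sum_mul_add_ite_eq _ h₀ h₁ h₂, Int.mul_ediv_cancel' (hb n hn)]
    ring
  rw [hsum, show 4 - n = 3 - n + 1 by omega, pow_succ']
  exact mul_dvd_mul_left _ (hy n hn)

theorem exists_beta_general (p : ℕ) (hp : p.Prime) (a r : ℕ)
    (ha : 4 ≤ a) (ha' : a ≤ p + 1)
    (hra : r ≡ a [MOD p - 1]) (hrap : r ≡ a [MOD p]) (hr : (a - 1) * p < r) :
    ∃ β : ℕ → ℤ,
      (∀ j ∈ (Finset.Ico (a - 1) (r - 1)).filter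
          (fun j => j % (p - 1) = (a - 1) % (p - 1)),
        β j ≡ (r.choose j : ℤ) [ZMOD (p : ℤ)]) ∧
      (∀ n ≤ 3,
        (∑ j ∈ ((Finset.Ico (a - 1) (r - 1)).filter
            (fun j => j % (p - 1) = (a - 1) % (p - 1) ∧ n ≤ j)),
          (j.choose n : ℤ) * β j) ≡ 0 [ZMOD (p : ℤ) ^ (4 - n)]) := by
  have hp3 : 3 ≤ p := by omega
  have hr' : a - 1 + 2 * (p - 1) < r - 1 := by
    have : 3 * p ≤ (a - 1) * p := Nat.mul_le_mul_right p (by omega)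
    omega
  set F := (Ico (a - 1) (r - 1)).filter (· ≡ a - 1 [MOD p - 1])
  have hmem (k : ℕ) (hk : k ≤ 2) : a - 1 + k * (p - 1) ∈ F :=
    mem_filter.mpr ⟨mem_Ico.mpr ⟨by omega, by nlinarith⟩, Nat.add_mul_mod_self_right ..⟩
  have hcop : (p - 1).Coprime p :=
    (Nat.coprime_self_sub_left hp.one_le).mpr (Nat.coprime_one_left p)
  obtain ⟨β, hβ, hpow⟩ := exists_modEq_pow_dvd_sum_choose_mul hcop
    (by simpa using hmem 0 (by omega)) (by simpa using hmem 1 (by omega)) (hmem 2 (by omega))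
    (fun j => r.choose j) fun n hn =>
      prime_dvd_sum_choose_mul_choose_Ico_filter_modEq hp hp3 (by omega) ha' (by omega) hra hrap
  refine ⟨β, fun j _ => hβ j, fun n hn => Int.modEq_zero_iff_dvd.mpr ?_⟩
  convert hpow n hn using 2
  exact filter_congr fun j hj => ⟨And.left, fun h => ⟨h, by simp only [mem_Ico] at hj; omega⟩⟩

/-- For a prime `p ≥ 5`, `a ∈ {4,…,p+1}` and `r ≡ a (mod p-1)`, `r ≡ a (mod p)`,
`r > (a-1)p`, there exist integers `β_j` (for `a-1 ≤ j < r-1`, `j ≡ a-1 (mod p-1)`)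
congruent to `C(r,j)` mod `p` with the weighted sums `∑ C(j,n) β_j` vanishing
mod `p^{4-n}` for `n = 0,1,2,3`. -/
theorem exists_beta (p : ℕ) (hp : p.Prime) (hp5 : 5 ≤ p) (a r : ℕ)
    (ha : 4 ≤ a) (ha' : a ≤ p + 1)
    (hra : r ≡ a [MOD p - 1]) (hrap : r ≡ a [MOD p]) (hr : (a - 1) * p < r) :
    ∃ β : ℕ → ℤ,
      (∀ j ∈ (Finset.Ico (a - 1) (r - 1)).filter
          (fun j => j % (p - 1) = (a - 1) % (p - 1)),
        β j ≡ (r.choose j : ℤ) [ZMOD (p : ℤ)]) ∧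
      (∀ n ≤ 3,
        (∑ j ∈ ((Finset.Ico (a - 1) (r - 1)).filter
            (fun j => j % (p - 1) = (a - 1) % (p - 1) ∧ n ≤ j)),
          (j.choose n : ℤ) * β j) ≡ 0 [ZMOD (p : ℤ) ^ (4 - n)]) :=
  exists_beta_general p hp a r ha ha' hra hrap hr
end
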